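/- Let W be a complete positive ordered abelian semigroup that contains a full sequence. Then W has a largest element p, i.e. an element p ∈ W with w ≤ p for all w ∈ W; moreover p can be taken to be the supremum of the sequence (n·u), where u is the supremum of any full sequence in W. -/

import Mathlib

namespace Stmt4

variable {W : Type*} [AddCommSemigroup W] [PartialOrder W]

/-- `rep n x` is the `(n+1)`-fold sum `x + x + ⋯ + x`, so that `rep n x = (n+1)·x`. -/
def rep : ℕ → W → W
  | 0, x => x
  | n + 1, x => rep n x + x

/-- `sumTo y n = y 0 + y 1 + ⋯ + y n`. -/
def sumTo (y : ℕ → W) : ℕ → W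
  | 0 => y 0
  | n + 1 => sumTo y n + y (n + 1)

/-- `x ∝ y` : `x ≤ n·y` for some positive integer `n` (encoded as `n + 1`, `n : ℕ`). -/
def Propto (x y : W) : Prop := ∃ n : ℕ, x ≤ rep n y

/-- `x <_s y` : `(k+1)·x ≤ k·y` for some positive integer `k`. -/
def StDom (x y : W) : Prop := ∃ k : ℕ, rep (k + 1) x ≤ rep k y

/-- `x ≪ y` : for every increasing sequence whose supremum exists and dominates `y`,
some term of the sequence dominates `x`. -/
def CC (x y : W) : Prop :=
  ∀ f : ℕ → W, Monotone f → ∀ s : W, IsLUB (Set.range f) s → y ≤ s → ∃ n, x ≤ f n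

/-- `W` is complete: every increasing sequence has a supremum, and `x ≤ y` holds as soon
as `x' ≤ y` for every `x' ≪ x`. -/
def Complete (W : Type*) [AddCommSemigroup W] [PartialOrder W] : Prop :=
  (∀ f : ℕ → W, Monotone f → ∃ s : W, IsLUB (Set.range f) s) ∧
    ∀ x y : W, (∀ x' : W, CC x' x → x' ≤ y) → x ≤ y

/-- A full sequence: increasing, and for all `y' ≪ y` one has `y' ∝ x n` for some `n`. -/
def FullSeq (x : ℕ → W) : Prop :=
  Monotone x ∧ ∀ y' y : W, CC y' y → ∃ n, Propto y' (x n)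

/-- A full element: `y' ∝ x` for all `y' ≪ y`. -/
def FullElem (x : W) : Prop := ∀ y' y : W, CC y' y → Propto y' x

/-- The Corona Factorization Property for semigroups: for every full sequence `(x_n)`,
every sequence `(y_n)`, every `x' ≪ x_0` and every positive integer `m` (encoded `m+1`)
with `x_n ≤ m·y_n` for all `n`, one has `x' ≤ y_0 + ⋯ + y_k` for some `k`. -/
def CFP (W : Type*) [AddCommSemigroup W] [PartialOrder W] : Prop :=
  ∀ x : ℕ → W, FullSeq x → ∀ y : ℕ → W, ∀ x' : W, ∀ m : ℕ,
    CC x' (x 0) → (∀ n, x n ≤ rep m (y n)) → ∃ k, x' ≤ sumTo y k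

/-! The supremum `u` of a full sequence is a full element, so every `w' ≪ w` lies
below some multiple of `u` and hence below `p = sup_n n·u`; completeness then gives `w ≤ p`. -/

theorem rep_mono (hadd : ∀ x y z : W, x ≤ y → x + z ≤ y + z) (m : ℕ) {a b : W} (hab : a ≤ b) :
    rep m a ≤ rep m b := by
  induction m with
  | zero => exact hab
  | succ n ih =>
    calc rep n a + a ≤ rep n b + a := hadd _ _ _ ih
      _ = a + rep n b := add_comm _ _
      _ ≤ b + rep n b := hadd _ _ _ hab
      _ = rep n b + b := add_comm _ _

theorem monotone_rep (hpos : ∀ x z : W, x ≤ x + z) (a : W) : Monotone fun n => rep n a :=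
  monotone_nat_of_le_succ fun n => hpos (rep n a) a

theorem Propto.mono_right (hadd : ∀ x y z : W, x ≤ y → x + z ≤ y + z) {a b c : W}
    (hab : Propto a b) (hbc : b ≤ c) : Propto a c :=
  let ⟨m, hm⟩ := hab
  ⟨m, hm.trans (rep_mono hadd m hbc)⟩

theorem FullSeq.fullElem_of_isLUB (hadd : ∀ x y z : W, x ≤ y → x + z ≤ y + z) {x : ℕ → W}
    (hx : FullSeq x) {u : W} (hu : IsLUB (Set.range x) u) : FullElem u := fun y' y hy' =>
  let ⟨n, hn⟩ := hx.2 y' y hy'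
  hn.mono_right hadd (hu.1 ⟨n, rfl⟩)

theorem FullElem.le_of_isLUB_rep (hcomplete : Complete W) {u : W} (hu : FullElem u) {p : W}
    (hp : IsLUB (Set.range fun n => rep n u) p) (w : W) : w ≤ p :=
  hcomplete.2 w p fun w' hw' =>
    let ⟨m, hm⟩ := hu w' w hw'
    hm.trans (hp.1 ⟨m, rfl⟩)

/-- A complete positive ordered abelian semigroup containing a full sequence has a largest
element `p`, which can be taken to be the supremum of the sequence `(n·u)` (here
`rep n u = (n+1)·u`), where `u` is the supremum of any full sequence. -/
theorem exists_largest_element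
    (hadd : ∀ x y z : W, x ≤ y → x + z ≤ y + z)
    (hpos : ∀ x z : W, x ≤ x + z)
    (hcomplete : Complete W)
    (x : ℕ → W) (hx : FullSeq x)
    (u : W) (hu : IsLUB (Set.range x) u) :
    ∃ p : W, IsLUB (Set.range fun n => rep n u) p ∧ ∀ w : W, w ≤ p := by
  obtain ⟨p, hp⟩ := hcomplete.1 _ (monotone_rep hpos u)
  exact ⟨p, hp, (hx.fullElem_of_isLUB hadd hu).le_of_isLUB_rep hcomplete hp⟩

end Stmt4
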